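/- Let R be a commutative ring, t, x units of R, and set c = x⁻¹(t⁻¹ - t). For each d ≥ 1, define R-linear maps f₀, f₁ from the free R-module on {0,1}^d to the free R-module on {0,1}^{d-1} by: f₀ sends the basis element indexed by (0, μ) to c times the basis element indexed by μ and sends (1, μ) to the basis element indexed by μ; f₁ sends (0, μ) to the basis element indexed by μ and (1, μ) to c times the basis element indexed by μ. If (t⁻¹ - t - x) and (t⁻¹ - t + x) are invertible in R, then the intersection of the kernels of f₀ and f₁ is zero. -/

import Mathlib

theorem stmt14 (R : Type*) [CommRing R] (t x : Rˣ) (d : ℕ)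
    (c : R) (hc : c = ((x⁻¹ : Rˣ) : R) * (((t⁻¹ : Rˣ) : R) - (t : R)))
    (f₀ f₁ : ((Fin (d + 1) → Fin 2) →₀ R) →ₗ[R] ((Fin d → Fin 2) →₀ R))
    (hf₀0 : ∀ μ : Fin d → Fin 2,
      f₀ (Finsupp.single (Fin.cons 0 μ) 1) = c • Finsupp.single μ 1)
    (hf₀1 : ∀ μ : Fin d → Fin 2,
      f₀ (Finsupp.single (Fin.cons 1 μ) 1) = Finsupp.single μ 1)
    (hf₁0 : ∀ μ : Fin d → Fin 2,
      f₁ (Finsupp.single (Fin.cons 0 μ) 1) = Finsupp.single μ 1)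
    (hf₁1 : ∀ μ : Fin d → Fin 2,
      f₁ (Finsupp.single (Fin.cons 1 μ) 1) = c • Finsupp.single μ 1)
    (h₁ : IsUnit (((t⁻¹ : Rˣ) : R) - (t : R) - (x : R)))
    (h₂ : IsUnit (((t⁻¹ : Rˣ) : R) - (t : R) + (x : R))) :
    LinearMap.ker f₀ ⊓ LinearMap.ker f₁ = ⊥ := by
  have hx : ((x⁻¹ : Rˣ) : R) * (x : R) = 1 := Units.inv_mul x
  have hcm : c - 1 = ((x⁻¹ : Rˣ) : R) * (((t⁻¹ : Rˣ) : R) - (t : R) - (x : R)) := by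
    rw [hc]; linear_combination hx
  have hcp : c + 1 = ((x⁻¹ : Rˣ) : R) * (((t⁻¹ : Rˣ) : R) - (t : R) + (x : R)) := by
    rw [hc]; linear_combination -hx
  have hcu : IsUnit (c ^ 2 - 1) := by
    have : c ^ 2 - 1 = (c - 1) * (c + 1) := by ring
    rw [this, hcm, hcp]
    exact ((x⁻¹.isUnit.mul h₁).mul (x⁻¹.isUnit.mul h₂))
  have h01 : ¬ ((0 : Fin 2) = 1) := by decide
  have h10 : ¬ ((1 : Fin 2) = 0) := by decide
  -- key linear functional identities
  have key0 : ∀ μ : Fin d → Fin 2,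
      c • ((Finsupp.lapply μ : ((Fin d → Fin 2) →₀ R) →ₗ[R] R).comp f₀)
        - (Finsupp.lapply μ).comp f₁
      = (c ^ 2 - 1) • (Finsupp.lapply (Fin.cons 0 μ) :
          ((Fin (d+1) → Fin 2) →₀ R) →ₗ[R] R) := by
    intro μ
    apply Finsupp.lhom_ext
    intro ν b
    have hν : Fin.cons (ν 0) (Fin.tail ν) = ν := Fin.cons_self_tail ν
    have h2 : ν 0 = 0 ∨ ν 0 = 1 := by omega
    rcases h2 with h | h <;> rw [h] at hν
    · rw [show (Finsupp.single ν b) = b • Finsupp.single (Fin.cons 0 (Fin.tail ν)) 1 by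
        rw [hν, Finsupp.smul_single, smul_eq_mul, mul_one]]
      simp only [map_smul, LinearMap.sub_apply, LinearMap.smul_apply, LinearMap.comp_apply,
        hf₀0, hf₁0, Finsupp.lapply_apply, Finsupp.smul_apply, Finsupp.single_apply,
        smul_eq_mul]
      simp only [Fin.cons_inj]
      by_cases hm : Fin.tail ν = μ <;> simp [hm] <;> ring
    · rw [show (Finsupp.single ν b) = b • Finsupp.single (Fin.cons 1 (Fin.tail ν)) 1 by
        rw [hν, Finsupp.smul_single, smul_eq_mul, mul_one]]
      simp only [map_smul, LinearMap.sub_apply, LinearMap.smul_apply, LinearMap.comp_apply,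
        hf₀1, hf₁1, Finsupp.lapply_apply, Finsupp.smul_apply, Finsupp.single_apply,
        smul_eq_mul]
      simp only [Fin.cons_inj]
      by_cases hm : Fin.tail ν = μ <;> simp [hm, h10] <;> ring
  have key1 : ∀ μ : Fin d → Fin 2,
      c • ((Finsupp.lapply μ : ((Fin d → Fin 2) →₀ R) →ₗ[R] R).comp f₁)
        - (Finsupp.lapply μ).comp f₀
      = (c ^ 2 - 1) • (Finsupp.lapply (Fin.cons 1 μ) :
          ((Fin (d+1) → Fin 2) →₀ R) →ₗ[R] R) := by
    intro μ
    apply Finsupp.lhom_ext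
    intro ν b
    have hν : Fin.cons (ν 0) (Fin.tail ν) = ν := Fin.cons_self_tail ν
    have h2 : ν 0 = 0 ∨ ν 0 = 1 := by omega
    rcases h2 with h | h <;> rw [h] at hν
    · rw [show (Finsupp.single ν b) = b • Finsupp.single (Fin.cons 0 (Fin.tail ν)) 1 by
        rw [hν, Finsupp.smul_single, smul_eq_mul, mul_one]]
      simp only [map_smul, LinearMap.sub_apply, LinearMap.smul_apply, LinearMap.comp_apply,
        hf₀0, hf₁0, Finsupp.lapply_apply, Finsupp.smul_apply, Finsupp.single_apply,
        smul_eq_mul]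
      simp only [Fin.cons_inj]
      by_cases hm : Fin.tail ν = μ <;> simp [hm, h01] <;> ring
    · rw [show (Finsupp.single ν b) = b • Finsupp.single (Fin.cons 1 (Fin.tail ν)) 1 by
        rw [hν, Finsupp.smul_single, smul_eq_mul, mul_one]]
      simp only [map_smul, LinearMap.sub_apply, LinearMap.smul_apply, LinearMap.comp_apply,
        hf₀1, hf₁1, Finsupp.lapply_apply, Finsupp.smul_apply, Finsupp.single_apply,
        smul_eq_mul]
      simp only [Fin.cons_inj]
      by_cases hm : Fin.tail ν = μ <;> simp [hm] <;> ring
  rw [eq_bot_iff]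
  intro v hv
  rw [Submodule.mem_inf, LinearMap.mem_ker, LinearMap.mem_ker] at hv
  obtain ⟨hv0, hv1⟩ := hv
  rw [Submodule.mem_bot]
  have e0 : ∀ μ : Fin d → Fin 2, v (Fin.cons 0 μ) = 0 := by
    intro μ
    have := DFunLike.congr_fun (key0 μ) v
    simp only [LinearMap.sub_apply, LinearMap.smul_apply, LinearMap.comp_apply, hv0, hv1,
      map_zero, smul_zero, mul_zero, sub_zero, zero_sub, neg_eq_zero,
      Finsupp.lapply_apply, smul_eq_mul] at this
    exact (hcu.mul_right_eq_zero).mp this.symm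
  have e1 : ∀ μ : Fin d → Fin 2, v (Fin.cons 1 μ) = 0 := by
    intro μ
    have := DFunLike.congr_fun (key1 μ) v
    simp only [LinearMap.sub_apply, LinearMap.smul_apply, LinearMap.comp_apply, hv0, hv1,
      map_zero, smul_zero, mul_zero, sub_zero, zero_sub, neg_eq_zero,
      Finsupp.lapply_apply, smul_eq_mul] at this
    exact (hcu.mul_right_eq_zero).mp this.symm
  ext ν
  have hν : Fin.cons (ν 0) (Fin.tail ν) = ν := Fin.cons_self_tail ν
  have h2 : ν 0 = 0 ∨ ν 0 = 1 := by omega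
  rcases h2 with h | h <;> rw [h] at hν <;> rw [← hν]
  · simpa using e0 (Fin.tail ν)
  · simpa using e1 (Fin.tail ν)
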